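/- The penetration depth of two overlapping closed balls in ℝ^n with distinct centers equals r + s - ‖p - q‖: namely, inf{‖T‖ : the translate of B̄(p,r) by T is disjoint from B̄(q,s)} = r + s - ‖p - q‖ when ‖p - q‖ < r + s and p ≠ q. -/

import Mathlib

/-!
Translating `B̄(p,r)` by `T` gives `B̄(p + T, r)`, and two closed balls in a real normed space are
disjoint exactly when the distance of their centres exceeds the sum of the radii. So the admissible
translations are those with `r + s < ‖(p - q) + T‖`. By the triangle inequality such a `T` has
`‖T‖ > r + s - ‖p - q‖`, while translations along `p - q` push the centres apart at unit speed and
approach this bound.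
-/

open Metric

section NormedSpace

variable {E : Type*} [NormedAddCommGroup E] [NormedSpace ℝ E]

lemma exists_norm_eq_and_norm_add_eq {x : E} (hx : x ≠ 0) {t : ℝ} (ht : 0 ≤ t) :
    ∃ T : E, ‖T‖ = t ∧ ‖x + T‖ = ‖x‖ + t := by
  have hc : 0 ≤ t / ‖x‖ := div_nonneg ht (norm_nonneg x)
  have hT : ‖(t / ‖x‖) • x‖ = t := by
    rw [norm_smul, Real.norm_of_nonneg hc, div_mul_cancel₀ t (norm_ne_zero_iff.mpr hx)]
  refine ⟨(t / ‖x‖) • x, hT, ?_⟩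
  rw [(SameRay.sameRay_nonneg_smul_right x hc).norm_add, hT]

lemma sInf_norm_of_lt_norm_add {x : E} (hx : x ≠ 0) {ρ : ℝ} (hρ : ‖x‖ ≤ ρ) :
    sInf {t : ℝ | ∃ T : E, ρ < ‖x + T‖ ∧ t = ‖T‖} = ρ - ‖x‖ := by
  have escape : ∀ t, ρ - ‖x‖ < t → ∃ T : E, ρ < ‖x + T‖ ∧ ‖T‖ = t := by
    intro t ht
    obtain ⟨T, hT, hxT⟩ := exists_norm_eq_and_norm_add_eq hx (t := t) (by linarith)
    exact ⟨T, by linarith, hT⟩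
  apply csInf_eq_of_forall_ge_of_forall_gt_exists_lt
  · obtain ⟨T, hT, -⟩ := escape (ρ - ‖x‖ + 1) (by linarith)
    exact ⟨‖T‖, T, hT, rfl⟩
  · rintro _ ⟨T, hT, rfl⟩
    linarith [norm_add_le x T]
  · intro w hw
    obtain ⟨T, hT, hTnorm⟩ := escape ((ρ - ‖x‖ + w) / 2) (by linarith)
    exact ⟨‖T‖, ⟨T, hT, rfl⟩, by linarith⟩

lemma forall_add_notMem_closedBall_iff {p q T : E} {r s : ℝ} (hr : 0 ≤ r) (hs : 0 ≤ s) :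
    (∀ a ∈ closedBall p r, a + T ∉ closedBall q s) ↔ r + s < ‖p - q + T‖ := by
  rw [sub_add, ← dist_eq_norm, ← disjoint_closedBall_closedBall_iff hr hs,
    ← preimage_add_right_closedBall, Set.disjoint_left]
  rfl

end NormedSpace

/-- Penetration depth of two overlapping closed balls with distinct centers:
the infimum of `‖T‖` over translations `T` moving `B̄(p,r)` out of contact
with `B̄(q,s)` equals `r + s - ‖p - q‖`. -/
theorem penetration_depth_overlapping_balls
    (n : ℕ) (p q : EuclideanSpace ℝ (Fin n)) (r s : ℝ)
    (hr : 0 ≤ r) (hs : 0 ≤ s)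
    (hne : 0 < ‖p - q‖) (hoverlap : ‖p - q‖ < r + s) :
    sInf {t : ℝ | ∃ T : EuclideanSpace ℝ (Fin n),
        (∀ a ∈ Metric.closedBall p r, a + T ∉ Metric.closedBall q s) ∧ t = ‖T‖} =
      r + s - ‖p - q‖ := by
  simp_rw [forall_add_notMem_closedBall_iff hr hs]
  exact sInf_norm_of_lt_norm_add (norm_pos_iff.mp hne) hoverlap.le
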